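/- For every convex element K(a,b,ã,b̃) satisfying condition (D1) (that is, ã ≤ a and b̃ ≤ b) and every p ≥ 1: I_p(a,b,ã,b̃) ≤ min{ a^{p−1}, b^{p−1} } / ( |l|^{p−1} · sin(α)^{p−1} ). -/

import Mathlib

noncomputable section

/-- The Euclidean plane. -/
abbrev E2 := EuclideanSpace ℝ (Fin 2)

/-- The point (x, y) of the Euclidean plane. -/
def pt2 (x y : ℝ) : E2 := WithLp.toLp 2 ![x, y]

/-- Length of the side `l` joining `V3 = (ta, tb)` and `V4 = (0, b)` of `K(a,b,ta,tb)`. -/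
def lenl (b ta tb : ℝ) : ℝ := Real.sqrt (ta ^ 2 + (b - tb) ^ 2)

/-- The sine of the interior angle α at `V4 = (0,b)` of the triangle with vertices
`V2 = (a,0)`, `V3 = (ta,tb)`, `V4 = (0,b)`. -/
def sinAlpha (a b ta tb : ℝ) : ℝ :=
  Real.sin (EuclideanGeometry.angle (pt2 a 0) (pt2 0 b) (pt2 ta tb))

/-- The quantity `I_p(a,b,ta,tb)`. -/
def Ip (p a b ta tb : ℝ) : ℝ :=
  ∫ z in (Set.Icc (0:ℝ) 1) ×ˢ (Set.Icc (0:ℝ) 1),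
    (1 + z.1 * (tb / b - 1) + z.2 * (ta / a - 1)) ^ (-(p - 1))

/-! Under (D1) the base `1 + x (b̃/b - 1) + y (ã/a - 1)` of the integrand is affine with nonpositive
slopes, so on the unit square it is at least its value `δ = ã/a + b̃/b - 1` at `(1, 1)`, whence
`I_p ≤ δ^{-(p-1)}`. On the other side, `|l| sin α` is the distance from `V3` to the diagonal `V2 V4`,
namely `a b δ / √(a² + b²) ≤ min(a, b) δ`. -/

open MeasureTheory Set Real InnerProductGeometry

lemma volume_unitSquare : volume (Icc (0 : ℝ) 1 ×ˢ Icc (0 : ℝ) 1) = 1 := by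
  rw [Measure.volume_eq_prod, Measure.prod_prod, Real.volume_Icc]
  norm_num

lemma setIntegral_unitSquare_rpow_neg_le {u v q : ℝ} (hu : u ≤ 0) (hv : v ≤ 0)
    (hpos : 0 < 1 + u + v) (hq : 0 ≤ q) :
    ∫ z in Icc (0 : ℝ) 1 ×ˢ Icc (0 : ℝ) 1, (1 + z.1 * u + z.2 * v) ^ (-q) ≤
      (1 + u + v) ^ (-q) := by
  have hbound : ∀ z ∈ Icc (0 : ℝ) 1 ×ˢ Icc (0 : ℝ) 1,
      ‖(1 + z.1 * u + z.2 * v) ^ (-q)‖ ≤ (1 + u + v) ^ (-q) := by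
    rintro ⟨x, y⟩ ⟨⟨hx0, hx1⟩, ⟨hy0, hy1⟩⟩
    have hcorner : 1 + u + v ≤ 1 + x * u + y * v := by nlinarith
    rw [norm_of_nonneg (rpow_nonneg (hpos.trans_le hcorner).le _)]
    exact rpow_le_rpow_of_nonpos hpos hcorner (neg_nonpos.2 hq)
  calc _ ≤ ‖∫ z in Icc (0 : ℝ) 1 ×ˢ Icc (0 : ℝ) 1, (1 + z.1 * u + z.2 * v) ^ (-q)‖ :=
        le_norm_self _
    _ ≤ (1 + u + v) ^ (-q) * (volume (Icc (0 : ℝ) 1 ×ˢ Icc (0 : ℝ) 1)).toReal :=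
        norm_setIntegral_le_of_norm_le_const (by rw [volume_unitSquare]; simp) hbound
    _ = (1 + u + v) ^ (-q) := by rw [volume_unitSquare, ENNReal.toReal_one, mul_one]

lemma Ip_le_rpow_neg {p a b ta tb : ℝ} (ha : 0 < a) (hb : 0 < b) (hconv : 1 < ta / a + tb / b)
    (hta : ta ≤ a) (htb : tb ≤ b) (hp : 1 ≤ p) :
    Ip p a b ta tb ≤ (ta / a + tb / b - 1) ^ (-(p - 1)) := by
  have h := setIntegral_unitSquare_rpow_neg_le (q := p - 1)
    (by linarith [(div_le_one hb).2 htb] : tb / b - 1 ≤ 0)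
    (by linarith [(div_le_one ha).2 hta] : ta / a - 1 ≤ 0) (by linarith) (by linarith)
  rwa [show 1 + (tb / b - 1) + (ta / a - 1) = ta / a + tb / b - 1 by ring] at h

lemma pt2_sub (x y x' y' : ℝ) : pt2 x y - pt2 x' y' = pt2 (x - x') (y - y') := by
  ext i; fin_cases i <;> simp [pt2]

lemma inner_pt2 (x y x' y' : ℝ) : inner ℝ (pt2 x y) (pt2 x' y') = x * x' + y * y' := by
  simp only [pt2, PiLp.inner_apply, RCLike.inner_apply, ringHom_apply, Fin.sum_univ_two,
    Matrix.cons_val_zero, Matrix.cons_val_one]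
  ring

lemma norm_pt2 (x y : ℝ) : ‖pt2 x y‖ = √(x ^ 2 + y ^ 2) := by
  simp [EuclideanSpace.norm_eq, pt2, Fin.sum_univ_two]

lemma sin_angle_pt2_mul_norm_mul_norm (x y x' y' : ℝ) :
    sin (angle (pt2 x y) (pt2 x' y')) * (‖pt2 x y‖ * ‖pt2 x' y'‖) = |x * y' - y * x'| := by
  rw [sin_angle_mul_norm_mul_norm, inner_pt2, inner_pt2, inner_pt2, ← sqrt_sq_eq_abs]
  congr 1
  ring

lemma sqrt_mul_lenl_mul_sinAlpha (a b ta tb : ℝ) :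
    √(a ^ 2 + b ^ 2) * (lenl b ta tb * sinAlpha a b ta tb) = |a * tb + b * ta - a * b| := by
  have h := sin_angle_pt2_mul_norm_mul_norm a (-b) ta (tb - b)
  rw [norm_pt2, norm_pt2, neg_sq] at h
  rw [sinAlpha, EuclideanGeometry.angle, vsub_eq_sub, vsub_eq_sub, pt2_sub, pt2_sub, lenl,
    sub_zero, zero_sub, sub_zero, show (b - tb) ^ 2 = (tb - b) ^ 2 by ring,
    show a * tb + b * ta - a * b = a * (tb - b) - -b * ta by ring, ← h]
  ring

lemma mul_le_min_mul_sqrt {a b : ℝ} (ha : 0 ≤ a) (hb : 0 ≤ b) :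
    a * b ≤ min a b * √(a ^ 2 + b ^ 2) := by
  rcases le_total a b with hab | hab
  · rw [min_eq_left hab]
    exact mul_le_mul_of_nonneg_left (le_sqrt_of_sq_le (le_add_of_nonneg_left (sq_nonneg a))) ha
  · rw [min_eq_right hab, mul_comm a b]
    exact mul_le_mul_of_nonneg_left (le_sqrt_of_sq_le (le_add_of_nonneg_right (sq_nonneg b))) hb

lemma rpow_neg_le_div_rpow {δ m P q : ℝ} (hδ : 0 < δ) (hm : 0 ≤ m) (hP : 0 < P) (hq : 0 ≤ q)
    (h : P ≤ m * δ) : δ ^ (-q) ≤ m ^ q / P ^ q :=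
  calc δ ^ (-q) = δ⁻¹ ^ q := by rw [rpow_neg hδ.le, inv_rpow hδ.le]
    _ ≤ (m / P) ^ q := by
      refine rpow_le_rpow (inv_nonneg.2 hδ.le) ?_ hq
      rw [le_div_iff₀ hP, inv_mul_le_iff₀ hδ, mul_comm]
      exact h
    _ = m ^ q / P ^ q := div_rpow hm hP.le q

lemma sinAlpha_nonneg (a b ta tb : ℝ) : 0 ≤ sinAlpha a b ta tb :=
  sin_nonneg_of_nonneg_of_le_pi (EuclideanGeometry.angle_nonneg _ _ _)
    (EuclideanGeometry.angle_le_pi _ _ _)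

/-- For convex elements `K(a,b,ta,tb)` under condition (D1), for any `p ≥ 1`,
`I_p ≤ min{a^{p-1}, b^{p-1}} / (|l|^{p-1} sin(α)^{p-1})`. -/
theorem Ip_le_of_D1 :
    ∀ a b ta tb : ℝ, 0 < a → 0 < b → 0 < ta → 0 < tb →
      1 < ta / a + tb / b →
      ta ≤ a → tb ≤ b →
      ∀ p : ℝ, 1 ≤ p →
        Ip p a b ta tb ≤
          min (a ^ (p - 1)) (b ^ (p - 1)) /
            (lenl b ta tb ^ (p - 1) * sinAlpha a b ta tb ^ (p - 1)) := by
  intro a b ta tb ha hb _ _ hconv hta htb p hp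
  set δ := ta / a + tb / b - 1 with hδ_def
  have hδ : 0 < δ := by linarith
  have hcross : a * tb + b * ta - a * b = a * b * δ := by rw [hδ_def]; field_simp; ring
  have hdiag : 0 < √(a ^ 2 + b ^ 2) := sqrt_pos.2 (by positivity)
  have hlP : lenl b ta tb * sinAlpha a b ta tb = a * b * δ / √(a ^ 2 + b ^ 2) := by
    rw [eq_div_iff hdiag.ne', mul_comm, sqrt_mul_lenl_mul_sinAlpha, hcross,
      abs_of_pos (by positivity)]
  have hlP_le : lenl b ta tb * sinAlpha a b ta tb ≤ min a b * δ := by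
    rw [hlP, div_le_iff₀ hdiag]
    calc a * b * δ ≤ min a b * √(a ^ 2 + b ^ 2) * δ :=
          mul_le_mul_of_nonneg_right (mul_le_min_mul_sqrt ha.le hb.le) hδ.le
      _ = min a b * δ * √(a ^ 2 + b ^ 2) := by ring
  calc Ip p a b ta tb ≤ δ ^ (-(p - 1)) := Ip_le_rpow_neg ha hb hconv hta htb hp
    _ ≤ min a b ^ (p - 1) / (lenl b ta tb * sinAlpha a b ta tb) ^ (p - 1) :=
      rpow_neg_le_div_rpow hδ (le_min ha.le hb.le) (by rw [hlP]; positivity) (by linarith) hlP_le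
    _ = _ := by
      rw [(monotoneOn_rpow_Ici_of_exponent_nonneg (by linarith)).map_min ha.le hb.le,
        mul_rpow (x := lenl b ta tb) (sqrt_nonneg _) (sinAlpha_nonneg a b ta tb)]
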